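/- Let f be a fitness function on the biallelic hypercube {0,1}^L with no two adjacent genotypes having equal fitness. If the landscape contains a simple sign epistasis motif, then there exists a reversing accessible path, i.e., a strictly fitness-increasing path in which some coordinate is flipped twice. -/
import Mathlib


/-- Flip coordinate `i` of a biallelic genotype. -/
def flp {L : ℕ} (g : Fin L → Bool) (i : Fin L) : Fin L → Bool :=
  Function.update g i (!g i)

/-- Hamming distance between genotypes. -/
def hamming {L : ℕ} (g h : Fin L → Bool) : ℕ :=
  (Finset.univ.filter fun i => g i ≠ h i).card

/-- Endpoint of the path obtained by applying a list of coordinate flips. -/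
def walk {L : ℕ} (g : Fin L → Bool) : List (Fin L) → (Fin L → Bool)
  | [] => g
  | i :: l => walk (flp g i) l

/-- A path (list of flips) is accessible if fitness strictly increases at every step. -/
def Accessible {L : ℕ} (f : (Fin L → Bool) → ℝ) : (Fin L → Bool) → List (Fin L) → Prop
  | _, [] => True
  | g, i :: l => f g < f (flp g i) ∧ Accessible f (flp g i) l

/-- Mutation `i` changes the sign of its fitness effect depending on the presence of
mutation `j`. -/
def SignFlip {L : ℕ} (f : (Fin L → Bool) → ℝ) (g : Fin L → Bool) (i j : Fin L) : Prop :=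
  ¬ ((f g < f (flp g i)) ↔ (f (flp g j) < f (flp (flp g j) i)))

/-- Simple sign epistasis on the square motif at background `g`, loci `i ≠ j`:
exactly one of the two mutations changes sign. -/
def SSE {L : ℕ} (f : (Fin L → Bool) → ℝ) (g : Fin L → Bool) (i j : Fin L) : Prop :=
  Xor' (SignFlip f g i j) (SignFlip f g j i)

/-- Reciprocal sign epistasis: both mutations change sign. -/
def RSE {L : ℕ} (f : (Fin L → Bool) → ℝ) (g : Fin L → Bool) (i j : Fin L) : Prop :=
  SignFlip f g i j ∧ SignFlip f g j i

/-- A peak (local fitness maximum). -/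
def Peak {L : ℕ} (f : (Fin L → Bool) → ℝ) (g : Fin L → Bool) : Prop :=
  ∀ i, f (flp g i) < f g

lemma flp_flp {L : ℕ} (g : Fin L → Bool) (i : Fin L) : flp (flp g i) i = g := by
  funext x; by_cases h : x = i <;> simp [flp, Function.update, h]

lemma flp_comm {L : ℕ} (g : Fin L → Bool) {i j : Fin L} (hij : i ≠ j) :
    flp (flp g i) j = flp (flp g j) i := by
  funext x
  by_cases hx : x = i <;> by_cases hy : x = j <;>
    simp [flp, Function.update, hx, hy, hij, hij.symm]

lemma sse_aux {L : ℕ} (f : (Fin L → Bool) → ℝ) (g : Fin L → Bool) {i j : Fin L}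
    (hij : i ≠ j) (hne : ∀ (g : Fin L → Bool) (i : Fin L), f (flp g i) ≠ f g)
    (hsf : SignFlip f g i j) (hnsf : ¬ SignFlip f g j i) :
    ∃ (v : Fin L → Bool) (l : List (Fin L)), Accessible f v l ∧ ¬ l.Nodup := by
  -- vertices: g, a = flp g i, b = flp g j, c = flp (flp g j) i
  have e1 : flp (flp g i) j = flp (flp g j) i := flp_comm g hij
  have e2 : flp (flp (flp g j) i) i = flp g j := flp_flp _ _
  have e3 : flp (flp g j) j = g := flp_flp _ _
  have e5 : flp (flp g i) i = g := flp_flp _ _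
  have e6 : flp (flp (flp g j) i) j = flp g i := by
    rw [flp_comm (flp g j) hij, e3]
  have heq : (f g < f (flp g j)) ↔ (f (flp g i) < f (flp (flp g j) i)) := by
    have := not_not.mp hnsf
    unfold SignFlip at this
    rwa [e1] at this
  have h1 : (f g < f (flp g i) ∧ f (flp (flp g j) i) < f (flp g j)) ∨
      (f (flp g i) < f g ∧ f (flp g j) < f (flp (flp g j) i)) := by
    rcases (hne g i).lt_or_gt with hX | hX <;>
      rcases (hne (flp g j) i).lt_or_gt with hY | hY
    · exact absurd (iff_of_false (asymm hX) (asymm hY)) hsf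
    · exact Or.inr ⟨hX, hY⟩
    · exact Or.inl ⟨hX, hY⟩
    · exact absurd (iff_of_true hX hY) hsf
  have h2 : (f g < f (flp g j) ∧ f (flp g i) < f (flp (flp g j) i)) ∨
      (f (flp g j) < f g ∧ f (flp (flp g j) i) < f (flp g i)) := by
    have hac : f (flp (flp g j) i) ≠ f (flp g i) := by
      have h := hne (flp g i) j; rwa [e1] at h
    rcases (hne g j).lt_or_gt with hZ | hZ <;> rcases hac.lt_or_gt with hW | hW
    · exact Or.inr ⟨hZ, hW⟩
    · exact absurd (heq.mpr hW) (asymm hZ)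
    · exact absurd (heq.mp hZ) (asymm hW)
    · exact Or.inl ⟨hZ, hW⟩
  rcases h1 with ⟨x1, x2⟩ | ⟨x1, x2⟩ <;> rcases h2 with ⟨y1, y2⟩ | ⟨y1, y2⟩
  · -- p<q, s<r, p<r, q<s : start g, path g→a→c→b
    refine ⟨g, [i, j, i], ?_, by simp⟩
    simp only [Accessible, and_true]
    rw [e1]
    exact ⟨x1, y2, by rw [e2]; exact x2⟩
  · -- p<q, s<r, r<p, s<q : start c, path c→b→g→a
    refine ⟨flp (flp g j) i, [i, j, i], ?_, by simp⟩
    simp only [Accessible, and_true]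
    rw [e2, e3]
    exact ⟨x2, y1, x1⟩
  · -- q<p, r<s, p<r, q<s : start a, path a→g→b→c
    refine ⟨flp g i, [i, j, i], ?_, by simp⟩
    simp only [Accessible, and_true]
    rw [e5]
    exact ⟨x1, y1, x2⟩
  · -- q<p, r<s, r<p, s<q : start b, path b→c→a→g
    refine ⟨flp g j, [i, j, i], ?_, by simp⟩
    simp only [Accessible, and_true]
    rw [e6, e5]
    exact ⟨x2, y2, x1⟩

/-- if the landscape contains an SSE motif, then there exists a reversing
accessible path (a strictly fitness-increasing path flipping some coordinate twice). -/
theorem stmt_3 (L : ℕ) (f : (Fin L → Bool) → ℝ)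
    (hne : ∀ (g : Fin L → Bool) (i : Fin L), f (flp g i) ≠ f g)
    (hsse : ∃ (g : Fin L → Bool) (i j : Fin L), i ≠ j ∧ SSE f g i j) :
    ∃ (g : Fin L → Bool) (l : List (Fin L)), Accessible f g l ∧ ¬ l.Nodup := by
  obtain ⟨g, i, j, hij, hsse⟩ := hsse
  rcases hsse with ⟨hsf, hnsf⟩ | ⟨hsf, hnsf⟩
  · exact sse_aux f g hij hne hsf hnsf
  · exact sse_aux f g hij.symm hne hsf hnsf
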